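/- Let l > n > 0 be coprime integers and suppose integers ν₁, ν₃, ν₄ satisfy l·ν₁ + n(ν₃+ν₄) = 0 and n·ν₁ + l(ν₃-ν₄) = 0 (the case ν₂ = 0 of the translation-invariance equations). Then there exists an integer d such that ν₁ = -d·n·l, ν₃ = d(l²+n²)/2, ν₄ = d(l²-n²)/2; moreover if l+n is odd, d must be even. -/
import Mathlib


theorem nu2_zero_classification
    (l n ν₁ ν₃ ν₄ : ℤ) (hln : n < l) (hn : 0 < n) (hcop : IsCoprime l n)
    (h1 : l * ν₁ + n * (ν₃ + ν₄) = 0)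
    (h2 : n * ν₁ + l * (ν₃ - ν₄) = 0) :
    ∃ d : ℤ, ν₁ = -d * n * l ∧ 2 * ν₃ = d * (l ^ 2 + n ^ 2) ∧
      2 * ν₄ = d * (l ^ 2 - n ^ 2) ∧ (Odd (l + n) → Even d) := by
  have hnl : (n : ℤ) * l ≠ 0 := ne_of_gt (by nlinarith)
  have hdvdn : n ∣ ν₁ := by
    have : n ∣ l * ν₁ := ⟨-(ν₃ + ν₄), by linarith⟩
    exact (hcop.symm.dvd_of_dvd_mul_left this)
  have hdvdl : l ∣ ν₁ := by
    have : l ∣ n * ν₁ := ⟨-(ν₃ - ν₄), by linarith⟩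
    exact (hcop.dvd_of_dvd_mul_left this)
  obtain ⟨c, hc⟩ : n * l ∣ ν₁ := IsCoprime.mul_dvd hcop.symm hdvdn hdvdl
  refine ⟨-c, by linarith [hc], ?_, ?_, ?_⟩
  · have key : n * l * ((l ^ 2 + n ^ 2) * c + 2 * ν₃) = 0 := by nlinarith [hc]
    have := mul_eq_zero.mp key
    rcases this with h | h
    · exact absurd h hnl
    · linarith
  · have key : n * l * ((l ^ 2 - n ^ 2) * c + 2 * ν₄) = 0 := by nlinarith [hc]
    rcases mul_eq_zero.mp key with h | h
    · exact absurd h hnl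
    · linarith
  · intro hodd
    have hodd2 : Odd (l ^ 2 + n ^ 2) := by
      have hl2 : l ^ 2 = l * l := sq l
      have hn2 : n ^ 2 = n * n := sq n
      rcases Int.even_or_odd l with he | ho
      · have hno : Odd n := by
          rcases Int.even_or_odd n with h | h
          · exact absurd (he.add h) (Int.not_even_iff_odd.mpr hodd)
          · exact h
        rw [hl2, hn2]; exact (he.mul_left l).add_odd (hno.mul hno)
      · have hne : Even n := by
          rcases Int.even_or_odd n with h | h
          · exact h
          · exact absurd (ho.add_odd h) (Int.not_even_iff_odd.mpr hodd)
        rw [hl2, hn2]; exact (ho.mul ho).add_even (hne.mul_left n)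
    have keven : Even ((-c) * (l ^ 2 + n ^ 2)) := by
      have key : n * l * ((l ^ 2 + n ^ 2) * c + 2 * ν₃) = 0 := by nlinarith [hc]
      rcases mul_eq_zero.mp key with h | h
      · exact absurd h hnl
      · exact ⟨ν₃, by linarith⟩
    rcases Int.even_mul.mp keven with h | h
    · simpa using h
    · exact absurd hodd2 (Int.not_odd_iff_even.mpr h)
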